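/- In the q-shuffle algebra V, for k,ℓ ∈ ℕ: [W_{−k}, G_ℓ]_{q,⋆} = [W_{−ℓ}, G_k]_{q,⋆} and [G_k, W_{ℓ+1}]_{q,⋆} = [G_ℓ, W_{k+1}]_{q,⋆}, where [a,b]_{q,⋆} = q a⋆b − q⁻¹ b⋆a. -/

import Mathlib

noncomputable section

/-- Words in the letters `x` (= `false`) and `y` (= `true`). -/
abbrev Wd := List Bool

/-- The underlying vector space of the free algebra `F⟨x,y⟩`,
with the words as a basis. -/
abbrev V (F : Type*) [Field F] := Wd →₀ F

/-- The pairing `⟨u,v⟩` on letters: `2` if equal, `-2` if distinct. -/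
def pr (a b : Bool) : ℤ := if a = b then 2 else -2

/-- `⟨u₁,b⟩ + ⟨u₂,b⟩ + ⋯ + ⟨u_r,b⟩` for a word `u` and a letter `b`. -/
def wsum (u : Wd) (b : Bool) : ℤ := (u.map fun a => pr a b).sum

variable {F : Type*} [Field F]

/-- Left multiplication by a letter, in the free (concatenation) algebra. -/
def lmul (a : Bool) (f : V F) : V F := Finsupp.mapDomain (fun w => a :: w) f

/-- The `q`-shuffle product of two words (as an element of `V F`), defined by
Rosso's recursion
`u ⋆ v = u₁((u₂⋯u_r) ⋆ v) + q^{⟨u₁,v₁⟩+⋯+⟨u_r,v₁⟩} v₁(u ⋆ (v₂⋯v_s))`. -/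
def sh (q : F) : Wd → Wd → V F
  | [], v => Finsupp.single v 1
  | u@(_ :: _), [] => Finsupp.single u 1
  | a :: u', b :: v' =>
      lmul a (sh q u' (b :: v')) +
        q ^ wsum (a :: u') b • lmul b (sh q (a :: u') v')
  termination_by u v => u.length + v.length
  decreasing_by all_goals (simp only [List.length_cons]; omega)

/-- The `q`-shuffle product on `V F`, extended bilinearly from words. -/
def st (q : F) (f g : V F) : V F :=
  f.sum fun u cu => g.sum fun v cv => (cu * cv) • sh q u v

/-- The concatenation (free-algebra) product on `V F`. -/
def cm (f g : V F) : V F :=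
  f.sum fun u cu => g.sum fun v cv => Finsupp.single (u ++ v) (cu * cv)

/-- Powers with respect to the concatenation product. -/
def cpow (f : V F) : ℕ → V F
  | 0 => Finsupp.single [] 1
  | n + 1 => cm f (cpow f n)

/-- The alternating word `W_{-k} = xyx⋯x` of length `2k+1`. -/
def altX : ℕ → Wd
  | 0 => [false]
  | k + 1 => false :: true :: altX k

/-- The alternating word `W_{k+1} = yxy⋯y` of length `2k+1`. -/
def altY : ℕ → Wd
  | 0 => [true]
  | k + 1 => true :: false :: altY k

/-- The alternating word `G_k = (yx)^k`. -/
def gw : ℕ → Wd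
  | 0 => []
  | k + 1 => true :: false :: gw k

/-- The alternating word `G̃_k = (xy)^k`. -/
def gtw : ℕ → Wd
  | 0 => []
  | k + 1 => false :: true :: gtw k

/-- `W_{-k}` as an element of `V F`. -/
def Wm (F : Type*) [Field F] (k : ℕ) : V F := Finsupp.single (altX k) 1

/-- `W_{k+1}` as an element of `V F`. -/
def Wp (F : Type*) [Field F] (k : ℕ) : V F := Finsupp.single (altY k) 1

/-- `G_k` as an element of `V F`. -/
def Gn (F : Type*) [Field F] (k : ℕ) : V F := Finsupp.single (gw k) 1

/-- `G̃_k` as an element of `V F`. -/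
def Gt (F : Type*) [Field F] (k : ℕ) : V F := Finsupp.single (gtw k) 1

/-! Write `x` for `false` and `y` for `true`. Peeling off the first letters with the defining
recursion gives `q W_{-k} ⋆ G_l - q⁻¹ G_l ⋆ W_{-k} = (q - q⁻¹) x (G_k ⋆ G_l)`, so the first identity
reduces to the commutativity `G_k ⋆ G_l = G_l ⋆ G_k`. That is proved by induction on `k + l`,
jointly with the symmetry in `(a, b)` of `G_a ⋆ W_{-b} + q² W_{-a} ⋆ G_b`.
The second identity is the image of the first under the antiautomorphism of `⋆` that reverses
words and swaps `x` and `y`: it sends `W_{-k}` to `W_{k+1}` and fixes `G_k`. -/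

section Letters

@[simp] lemma pr_self (a : Bool) : pr a a = 2 := if_pos rfl

@[simp] lemma pr_false_true : pr false true = -2 := rfl

@[simp] lemma pr_true_false : pr true false = -2 := rfl

lemma pr_comm (a b : Bool) : pr a b = pr b a := by
  cases a <;> cases b <;> rfl

lemma pr_not_not (a b : Bool) : pr (!a) (!b) = pr a b := by
  cases a <;> cases b <;> rfl

@[simp] lemma wsum_nil (b : Bool) : wsum [] b = 0 := rfl

@[simp] lemma wsum_cons (a : Bool) (u : Wd) (b : Bool) :
    wsum (a :: u) b = pr a b + wsum u b := by
  simp [wsum]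

lemma wsum_append_singleton (u : Wd) (a b : Bool) :
    wsum (u ++ [a]) b = wsum u b + pr a b := by
  simp [wsum]

lemma wsum_reverse (u : Wd) (b : Bool) : wsum u.reverse b = wsum u b := by
  simp [wsum, List.sum_reverse]

lemma wsum_map_not (u : Wd) (b : Bool) : wsum (u.map not) (!b) = wsum u b := by
  induction u with
  | nil => rfl
  | cons a u ih => simp [ih, pr_not_not]

@[simp] lemma wsum_gw (k : ℕ) (b : Bool) : wsum (gw k) b = 0 := by
  induction k with
  | zero => rfl
  | succ k ih => cases b <;> simp [gw, ih, pr]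

end Letters

section AlternatingWords

lemma altX_eq_cons_gw (k : ℕ) : altX k = false :: gw k := by
  induction k with
  | zero => rfl
  | succ k ih => simp [altX, gw, ih]

lemma altY_eq_cons_gtw (k : ℕ) : altY k = true :: gtw k := by
  induction k with
  | zero => rfl
  | succ k ih => simp [altY, gtw, ih]

lemma gtw_succ_eq_append (k : ℕ) : gtw (k + 1) = gtw k ++ [false, true] := by
  induction k with
  | zero => rfl
  | succ k ih => simp [gtw] at ih ⊢; exact ih

lemma gw_append_true (k : ℕ) : gw k ++ [true] = true :: gtw k := by
  induction k with
  | zero => rfl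
  | succ k ih => simp [gw, gtw, ih]

lemma gw_map_not (k : ℕ) : (gw k).map not = gtw k := by
  induction k with
  | zero => rfl
  | succ k ih => simp [gw, gtw, ih]

lemma gw_reverse (k : ℕ) : (gw k).reverse = gtw k := by
  induction k with
  | zero => rfl
  | succ k ih => simp [gw, ih, gtw_succ_eq_append]

lemma gtw_reverse (k : ℕ) : (gtw k).reverse = gw k := by
  rw [← gw_reverse, List.reverse_reverse]

def flipRev (w : Wd) : Wd := (w.map not).reverse

lemma flipRev_gw (k : ℕ) : flipRev (gw k) = gw k := by
  rw [flipRev, gw_map_not, gtw_reverse]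

lemma flipRev_altX (k : ℕ) : flipRev (altX k) = altY k := by
  simp [flipRev, altX_eq_cons_gw, altY_eq_cons_gtw, gw_map_not, gtw_reverse, gw_append_true]

end AlternatingWords

section LetterMultiplication

def rmul (c : Bool) (f : V F) : V F := Finsupp.mapDomain (fun w => w ++ [c]) f

lemma lmul_single (a : Bool) (w : Wd) (c : F) :
    lmul a (Finsupp.single w c) = Finsupp.single (a :: w) c :=
  Finsupp.mapDomain_single

lemma lmul_add (a : Bool) (f g : V F) : lmul a (f + g) = lmul a f + lmul a g :=
  Finsupp.mapDomain_add

lemma lmul_smul (a : Bool) (c : F) (f : V F) : lmul a (c • f) = c • lmul a f :=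
  Finsupp.mapDomain_smul c f

lemma rmul_single (c : Bool) (w : Wd) (x : F) :
    rmul c (Finsupp.single w x) = Finsupp.single (w ++ [c]) x :=
  Finsupp.mapDomain_single

lemma rmul_add (c : Bool) (f g : V F) : rmul c (f + g) = rmul c f + rmul c g :=
  Finsupp.mapDomain_add

lemma rmul_smul (c : Bool) (x : F) (f : V F) : rmul c (x • f) = x • rmul c f :=
  Finsupp.mapDomain_smul x f

lemma lmul_rmul (a c : Bool) (f : V F) : lmul a (rmul c f) = rmul c (lmul a f) := by
  simp only [lmul, rmul, ← Finsupp.mapDomain_comp]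
  rfl

lemma mapDomain_reverse_lmul (a : Bool) (f : V F) :
    Finsupp.mapDomain List.reverse (lmul a f) = rmul a (Finsupp.mapDomain List.reverse f) := by
  simp only [lmul, rmul, ← Finsupp.mapDomain_comp]
  congr 1
  funext w
  simp

lemma mapDomain_map_not_lmul (a : Bool) (f : V F) :
    Finsupp.mapDomain (List.map not) (lmul a f) =
      lmul (!a) (Finsupp.mapDomain (List.map not) f) := by
  simp only [lmul, ← Finsupp.mapDomain_comp]
  rfl

end LetterMultiplication

section ShuffleSymmetries

variable (q : F)

lemma sh_nil_left (v : Wd) : sh q [] v = Finsupp.single v 1 := by rw [sh]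

lemma sh_nil_right (u : Wd) : sh q u [] = Finsupp.single u 1 := by
  cases u <;> rw [sh]

lemma sh_cons_cons (a b : Bool) (u v : Wd) :
    sh q (a :: u) (b :: v) =
      lmul a (sh q u (b :: v)) + q ^ wsum (a :: u) b • lmul b (sh q (a :: u) v) := by
  rw [sh]

lemma st_single_single (u v : Wd) :
    st q (Finsupp.single u 1) (Finsupp.single v 1) = sh q u v := by
  rw [st, Finsupp.sum_single_index, Finsupp.sum_single_index] <;> simp

lemma sh_append_singleton (hq : q ≠ 0) : ∀ (u v : Wd) (a b : Bool),
    sh q (u ++ [a]) (v ++ [b]) =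
      rmul b (sh q (u ++ [a]) v) + q ^ wsum (v ++ [b]) a • rmul a (sh q u (v ++ [b]))
  | [], [], a, b => by
      simp [sh_cons_cons, sh_nil_left, sh_nil_right, lmul_single, rmul_single, pr_comm b a]
  | [], d :: w, a, b => by
      have ih := sh_append_singleton hq [] w a b
      simp only [List.nil_append] at ih
      simp only [List.nil_append, List.cons_append, sh_cons_cons, sh_nil_left, ih,
        lmul_add, lmul_smul, rmul_add, rmul_smul, lmul_single, rmul_single, lmul_rmul,
        wsum_cons, wsum_nil, wsum_append_singleton, add_zero, zpow_add₀ hq]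
      rw [pr_comm d a, pr_comm b a]
      match_scalars <;> ring1
  | c :: m, [], a, b => by
      have ih := sh_append_singleton hq m [] a b
      simp only [List.nil_append] at ih
      simp only [List.nil_append, List.cons_append, sh_cons_cons, sh_nil_right, ih,
        lmul_add, lmul_smul, rmul_add, rmul_smul, lmul_single, rmul_single, lmul_rmul,
        wsum_cons, wsum_nil, wsum_append_singleton, add_zero, zpow_add₀ hq]
      rw [pr_comm b a]
      match_scalars <;> ring1
  | c :: m, d :: w, a, b => by
      have ih₁ := sh_append_singleton hq m (d :: w) a b
      have ih₂ := sh_append_singleton hq (c :: m) w a b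
      simp only [List.cons_append] at ih₁ ih₂ ⊢
      rw [sh_cons_cons q c d (m ++ [a]) (w ++ [b]), ih₁, ih₂,
        sh_cons_cons q c d (m ++ [a]) w, sh_cons_cons q c d m (w ++ [b])]
      simp only [lmul_add, lmul_smul, rmul_add, rmul_smul, lmul_rmul, wsum_cons,
        wsum_append_singleton, zpow_add₀ hq, smul_smul, smul_add]
      rw [pr_comm d a, pr_comm b a]
      match_scalars <;> ring1
  termination_by u v => u.length + v.length

lemma mapDomain_reverse_sh (hq : q ≠ 0) : ∀ u v : Wd,
    Finsupp.mapDomain List.reverse (sh q u v) = sh q v.reverse u.reverse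
  | [], v => by simp [sh_nil_left, sh_nil_right]
  | c :: m, [] => by simp [sh_nil_left, sh_nil_right]
  | c :: m, d :: w => by
      rw [sh_cons_cons, Finsupp.mapDomain_add, Finsupp.mapDomain_smul,
        mapDomain_reverse_lmul, mapDomain_reverse_lmul,
        mapDomain_reverse_sh hq m (d :: w), mapDomain_reverse_sh hq (c :: m) w,
        List.reverse_cons, List.reverse_cons, sh_append_singleton q hq]
      simp only [wsum_cons, wsum_append_singleton, wsum_reverse, zpow_add₀ hq]
      match_scalars <;> ring1
  termination_by u v => u.length + v.length

lemma mapDomain_map_not_sh : ∀ u v : Wd,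
    Finsupp.mapDomain (List.map not) (sh q u v) = sh q (u.map not) (v.map not)
  | [], v => by simp [sh_nil_left]
  | c :: m, [] => by simp [sh_nil_right]
  | c :: m, d :: w => by
      rw [sh_cons_cons, Finsupp.mapDomain_add, Finsupp.mapDomain_smul,
        mapDomain_map_not_lmul, mapDomain_map_not_lmul,
        mapDomain_map_not_sh m (d :: w), mapDomain_map_not_sh (c :: m) w,
        List.map_cons, List.map_cons, sh_cons_cons]
      simp only [← List.map_cons, wsum_map_not]
  termination_by u v => u.length + v.length

lemma lmapDomain_flipRev_sh (hq : q ≠ 0) (u v : Wd) :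
    Finsupp.lmapDomain F F flipRev (sh q u v) = sh q (flipRev v) (flipRev u) := by
  rw [Finsupp.lmapDomain_apply, show flipRev = List.reverse ∘ List.map not from rfl,
    Finsupp.mapDomain_comp, mapDomain_map_not_sh, mapDomain_reverse_sh q hq]
  rfl

/-- The paper's `[u, v]_{q,⋆}`, on words. -/
def qBracket (u v : Wd) : V F := q • sh q u v - q⁻¹ • sh q v u

lemma lmapDomain_flipRev_qBracket (hq : q ≠ 0) (u v : Wd) :
    Finsupp.lmapDomain F F flipRev (qBracket q u v) = qBracket q (flipRev v) (flipRev u) := by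
  simp only [qBracket, map_sub, map_smul, lmapDomain_flipRev_sh q hq]

end ShuffleSymmetries

section CommutativityOfG

variable (q : F)

/-- `G_a ⋆ W_{-b} + q² W_{-a} ⋆ G_b`: the recursions for `G_a ⋆ G_b` and for this combination
only involve each other, so both can be shown symmetric in `(a, b)` by one induction. -/
def mixSh (a b : ℕ) : V F :=
  sh q (gw a) (false :: gw b) + q ^ (2 : ℤ) • sh q (false :: gw a) (gw b)

lemma sh_cons_gw_gw_succ (a b : ℕ) :
    sh q (false :: gw a) (gw (b + 1)) =
      lmul false (sh q (gw a) (gw (b + 1))) +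
        q ^ (-2 : ℤ) • lmul true (lmul false (mixSh q a b)) := by
  change sh q (false :: gw a) (true :: false :: gw b) = _
  rw [sh_cons_cons, sh_cons_cons]
  simp only [wsum_cons, wsum_gw, pr_self, pr_false_true, add_zero, mixSh, lmul_add, lmul_smul,
    smul_add, smul_smul, add_left_inj]
  rfl

lemma sh_gw_succ_cons_gw (a b : ℕ) :
    sh q (gw (a + 1)) (false :: gw b) =
      lmul false (sh q (gw (a + 1)) (gw b)) + lmul true (lmul false (mixSh q a b)) := by
  change sh q (true :: false :: gw a) (false :: gw b) = _
  rw [sh_cons_cons, sh_cons_cons]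
  simp only [wsum_cons, wsum_gw, pr_self, pr_true_false, Int.reduceAdd, add_zero, zpow_zero,
    one_smul, mixSh, lmul_add, lmul_smul]
  rw [show (true :: false :: gw a : Wd) = gw (a + 1) from rfl]
  abel

lemma sh_gw_succ_gw_succ (a b : ℕ) :
    sh q (gw (a + 1)) (gw (b + 1)) =
      lmul true (sh q (false :: gw a) (gw (b + 1)) + sh q (gw (a + 1)) (false :: gw b)) := by
  conv_lhs => rw [show gw (a + 1) = true :: false :: gw a from rfl,
    show gw (b + 1) = true :: false :: gw b from rfl, sh_cons_cons]
  simp only [wsum_cons, wsum_gw, pr_self, pr_false_true, Int.reduceAdd, add_zero, zpow_zero,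
    one_smul, lmul_add]
  rfl

lemma mixSh_succ_succ (hq : q ≠ 0) (a b : ℕ) :
    mixSh q (a + 1) (b + 1) =
      (1 + q ^ (2 : ℤ)) • lmul false (sh q (gw (a + 1)) (gw (b + 1))) +
        lmul true (lmul false (mixSh q a (b + 1) + mixSh q (a + 1) b)) := by
  rw [mixSh, sh_cons_gw_gw_succ q (a + 1) b, sh_gw_succ_cons_gw q a (b + 1), lmul_add, lmul_add,
    smul_add, smul_smul, ← zpow_add₀ hq]
  norm_num
  module

lemma mixSh_zero_left (hq : q ≠ 0) (b : ℕ) : mixSh q 0 b = mixSh q b 0 := by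
  simp only [mixSh, show gw 0 = [] from rfl, sh_nil_left, sh_nil_right]
  induction b with
  | zero => simp only [gw, sh_nil_left, sh_nil_right]
  | succ b ih =>
      have ih' := congrArg (fun z => lmul true (lmul false z)) ih
      simp only [lmul_add, lmul_smul, lmul_single] at ih'
      rw [show gw (b + 1) = true :: false :: gw b from rfl,
        sh_cons_cons q false true [] (false :: gw b), sh_cons_cons q false false [] (gw b),
        sh_cons_cons q true false (false :: gw b) [], sh_cons_cons q false false (gw b) []]
      simp only [sh_nil_left, sh_nil_right, lmul_add, lmul_smul, lmul_single, wsum_cons,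
        wsum_gw, wsum_nil, smul_add, smul_smul, pr_self, pr_false_true, pr_true_false, add_zero,
        Int.reduceAdd, zpow_zero]
      rw [eq_sub_of_add_eq ih'.symm]
      match_scalars <;> (field_simp; try ring1)

lemma sh_gw_comm_and_mixSh_comm (hq : q ≠ 0) : ∀ a b : ℕ,
    sh q (gw a) (gw b) = sh q (gw b) (gw a) ∧ mixSh q a b = mixSh q b a
  | 0, b => ⟨by simp [gw, sh_nil_left, sh_nil_right], mixSh_zero_left q hq b⟩
  | a + 1, 0 => ⟨by simp [gw, sh_nil_left, sh_nil_right], (mixSh_zero_left q hq (a + 1)).symm⟩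
  | a + 1, b + 1 => by
      obtain ⟨-, hmix⟩ := sh_gw_comm_and_mixSh_comm hq a b
      obtain ⟨hsh₁, hmix₁⟩ := sh_gw_comm_and_mixSh_comm hq a (b + 1)
      obtain ⟨hsh₂, hmix₂⟩ := sh_gw_comm_and_mixSh_comm hq (a + 1) b
      have hsh : sh q (gw (a + 1)) (gw (b + 1)) = sh q (gw (b + 1)) (gw (a + 1)) := by
        rw [sh_gw_succ_gw_succ, sh_gw_succ_gw_succ, sh_cons_gw_gw_succ, sh_cons_gw_gw_succ,
          sh_gw_succ_cons_gw, sh_gw_succ_cons_gw, hsh₁, hsh₂, hmix]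
        congr 1
        abel
      refine ⟨hsh, ?_⟩
      rw [mixSh_succ_succ q hq, mixSh_succ_succ q hq, hsh, hmix₁, hmix₂, add_comm (mixSh q b _)]
  termination_by a b => a + b

lemma qBracket_altX_gw (hq : q ≠ 0) (k l : ℕ) :
    qBracket q (altX k) (gw l) = (q - q⁻¹) • lmul false (sh q (gw k) (gw l)) := by
  rw [qBracket, altX_eq_cons_gw]
  cases l with
  | zero => simp [gw, sh_nil_left, sh_nil_right, lmul_single, sub_smul]
  | succ l =>
      rw [sh_cons_gw_gw_succ, sh_gw_succ_cons_gw, (sh_gw_comm_and_mixSh_comm q hq (l + 1) k).1,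
        (sh_gw_comm_and_mixSh_comm q hq l k).2]
      match_scalars <;> (field_simp; try ring1)

lemma qBracket_altX_gw_comm (hq : q ≠ 0) (k l : ℕ) :
    qBracket q (altX k) (gw l) = qBracket q (altX l) (gw k) := by
  rw [qBracket_altX_gw q hq, qBracket_altX_gw q hq, (sh_gw_comm_and_mixSh_comm q hq k l).1]

lemma qBracket_gw_altY_comm (hq : q ≠ 0) (k l : ℕ) :
    qBracket q (gw k) (altY l) = qBracket q (gw l) (altY k) := by
  have h := congrArg (Finsupp.lmapDomain F F flipRev) (qBracket_altX_gw_comm q hq l k)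
  simpa only [lmapDomain_flipRev_qBracket q hq, flipRev_gw, flipRev_altX] using h

end CommutativityOfG

theorem stmt_13_general {F : Type*} [Field F] (q : F) (hq : q ≠ 0) (k l : ℕ) :
    q • st q (Wm F k) (Gn F l) - q⁻¹ • st q (Gn F l) (Wm F k)
        = q • st q (Wm F l) (Gn F k) - q⁻¹ • st q (Gn F k) (Wm F l) ∧
    q • st q (Gn F k) (Wp F l) - q⁻¹ • st q (Wp F l) (Gn F k)
        = q • st q (Gn F l) (Wp F k) - q⁻¹ • st q (Wp F k) (Gn F l) := by
  simp only [Wm, Wp, Gn, st_single_single]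
  exact ⟨qBracket_altX_gw_comm q hq k l, qBracket_gw_altY_comm q hq k l⟩

/-- `[W_{−k}, G_ℓ]_q = [W_{−ℓ}, G_k]_q` and `[G_k, W_{ℓ+1}]_q = [G_ℓ, W_{k+1}]_q`. -/
theorem stmt_13 {F : Type*} [Field F] (q : F) (hq : q ≠ 0)
    (hq' : ∀ n : ℕ, 0 < n → q ^ n ≠ 1) (k l : ℕ) :
    q • st q (Wm F k) (Gn F l) - q⁻¹ • st q (Gn F l) (Wm F k)
        = q • st q (Wm F l) (Gn F k) - q⁻¹ • st q (Gn F k) (Wm F l) ∧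
    q • st q (Gn F k) (Wp F l) - q⁻¹ • st q (Wp F l) (Gn F k)
        = q • st q (Gn F l) (Wp F k) - q⁻¹ • st q (Wp F k) (Gn F l) :=
  stmt_13_general q hq k l
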